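/- Let p be an odd prime. Then W_p ≡ ∑_{a=1}^{p−1} q_p(a) − p·∑_{a=1}^{p−1} H_a·q_p(a) (mod p²) as rational numbers. -/

import Mathlib

/-! With `n = p - 1` even, the `n`-th forward difference of `x ↦ x ^ n - 1` at `0` reads
`n! + 1 = ∑ (-1)^a C(n,a) (a^n - 1)`, i.e. `W_p = ∑_{a=1}^{p-1} (-1)^a C(p-1,a) q_p(a)` exactly.
Since `(-1)^a C(p-1,a) = ∏_{k ≤ a} (1 - p/k) ≡ 1 - p H_a (mod p²)` for `a < p`, the theorem
follows. -/

open Finset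

/-- `x ≡ y (mod p^k)` for rationals: `x - y = p^k * (c/d)` with `p ∤ d`. -/
def ratCongr (p k : ℕ) (x y : ℚ) : Prop :=
  ∃ c d : ℤ, ¬ (p : ℤ) ∣ d ∧ x - y = (p : ℚ) ^ k * ((c : ℚ) / (d : ℚ))

/-- The Wilson quotient `W_p = ((p-1)! + 1)/p` (an integer by Wilson's theorem). -/
def wilsonQuotient (p : ℕ) : ℤ := ((Nat.factorial (p - 1) : ℤ) + 1) / p

/-- The Fermat quotient `q_p(a) = (a^(p-1) - 1)/p` (an integer for `p ∤ a`). -/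
def fermatQuotient (p a : ℕ) : ℤ := ((a : ℤ) ^ (p - 1) - 1) / p

/-- A prime `p` is a Wilson prime if `p ∣ W_p`. -/
def IsWilsonPrime (p : ℕ) : Prop := (p : ℤ) ∣ wilsonQuotient p

/-- A prime `p` is a Lerch prime if `∑_{a=1}^{p-1} q_p(a) ≡ W_p (mod p²)`. -/
def IsLerchPrime (p : ℕ) : Prop :=
  (p : ℤ) ^ 2 ∣ (∑ a ∈ Icc 1 (p - 1), fermatQuotient p a) - wilsonQuotient p

/-- The harmonic number `H_a = ∑_{k=1}^{a} 1/k`. -/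
def harmonicNum (a : ℕ) : ℚ := ∑ k ∈ Icc 1 a, (1 : ℚ) / k

/-- The generalized harmonic number `H_{a,2} = ∑_{k=1}^{a} 1/k²`. -/
def harmonicNum2 (a : ℕ) : ℚ := ∑ k ∈ Icc 1 a, (1 : ℚ) / (k : ℚ) ^ 2

open scoped Nat

/-- The localization `ℤ_(p)` of `ℤ` at `p`, as a subring of `ℚ`. -/
def pIntegralRat (p : ℕ) [hp : Fact p.Prime] : Subring ℚ where
  carrier := {x | ¬ p ∣ x.den}
  one_mem' := by simpa using hp.out.one_lt.ne'
  zero_mem' := by simpa using hp.out.one_lt.ne'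
  neg_mem' := by simp
  add_mem' {x y} hx hy h :=
    (hp.out.dvd_mul.mp (h.trans (Rat.add_den_dvd x y))).elim hx hy
  mul_mem' {x y} hx hy h :=
    (hp.out.dvd_mul.mp (h.trans (Rat.mul_den_dvd x y))).elim hx hy

section pIntegralRat

variable {p : ℕ} [Fact p.Prime]

theorem mem_pIntegralRat {x : ℚ} : x ∈ pIntegralRat p ↔ ¬ p ∣ x.den := Iff.rfl

theorem inv_natCast_mem_pIntegralRat {k : ℕ} (hk : ¬ p ∣ k) : (k : ℚ)⁻¹ ∈ pIntegralRat p := by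
  rw [mem_pIntegralRat, Rat.inv_natCast_den]
  split_ifs with h
  · exact (Fact.out : p.Prime).not_dvd_one
  · exact hk

theorem ratCongr_of_sub_eq_mul {k : ℕ} {x y z : ℚ} (hz : z ∈ pIntegralRat p)
    (h : x - y = p ^ k * z) : ratCongr p k x y :=
  ⟨z.num, z.den, by exact_mod_cast hz, by rw [h, Int.cast_natCast, Rat.num_div_den]⟩

end pIntegralRat

theorem Subring.exists_prod_one_sub_mul_eq {A ι : Type*} [CommRing A] (S : Subring A) {t : A}
    (ht : t ∈ S) (s : Finset ι) {x : ι → A} (hx : ∀ i ∈ s, x i ∈ S) :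
    ∃ r ∈ S, ∏ i ∈ s, (1 - t * x i) = 1 - t * ∑ i ∈ s, x i + t ^ 2 * r := by
  classical
  induction s using Finset.induction_on with
  | empty => exact ⟨0, S.zero_mem, by simp⟩
  | insert j s hj ih =>
    obtain ⟨r, hr, hprod⟩ := ih fun i hi => hx i (mem_insert_of_mem hi)
    have hxj := hx j (mem_insert_self j s)
    refine ⟨x j * ∑ i ∈ s, x i + r - t * x j * r, ?_, ?_⟩
    · have hsum := S.sum_mem fun i hi => hx i (mem_insert_of_mem hi)
      exact S.sub_mem (S.add_mem (S.mul_mem hxj hsum) hr) (S.mul_mem (S.mul_mem ht hxj) hr)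
    · rw [prod_insert hj, sum_insert hj, hprod]; ring

theorem neg_one_pow_mul_choose_eq_prod (n a : ℕ) :
    (-1) ^ a * (n.choose a : ℚ) = ∏ k ∈ Icc 1 a, (1 - ((n : ℚ) + 1) / k) := by
  induction a with
  | zero => simp
  | succ a ih =>
    rw [prod_Icc_succ_top (by omega), ← ih]
    rcases le_or_gt a n with ha | ha
    · have hrec := congrArg (Nat.cast : ℕ → ℚ) (Nat.choose_succ_right_eq n a)
      push_cast [Nat.cast_sub ha] at hrec ⊢
      field_simp
      linear_combination -(-1) ^ a * hrec
    · simp [Nat.choose_eq_zero_of_lt ha, Nat.choose_eq_zero_of_lt (Nat.lt_succ_of_lt ha)]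

theorem sum_neg_one_pow_mul_choose_mul_pow_self {R : Type*} [CommRing R] {n : ℕ} (hn : Even n) :
    ∑ k ∈ range (n + 1), (-1) ^ k * (n.choose k : R) * (k : R) ^ n = n ! := by
  have := congrFun (fwdDiff_iter_eq_factorial (R := R) (n := n)) 0
  rw [fwdDiff_iter_eq_sum_shift] at this
  simp only [Pi.natCast_apply, zero_add, nsmul_eq_mul, mul_one, zsmul_eq_mul] at this
  push_cast at this
  rw [← this]
  refine sum_congr rfl fun k hk => ?_
  have hparity : (n - k) % 2 = k % 2 := by
    rw [Nat.even_iff] at hn; rw [mem_range] at hk; omega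
  rw [neg_one_pow_eq_pow_mod_two (n - k), hparity, ← neg_one_pow_eq_pow_mod_two]

theorem sum_range_succ_eq_add_sum_Icc {M : Type*} [AddCommMonoid M] (f : ℕ → M) (n : ℕ) :
    ∑ k ∈ range (n + 1), f k = f 0 + ∑ k ∈ Icc 1 n, f k := by
  rw [Nat.range_succ_eq_Icc_zero, Icc_eq_cons_Ioc (Nat.zero_le n), sum_cons,
    ← Icc_succ_left_eq_Ioc, Nat.succ_eq_succ]

section quotients

variable {p : ℕ} (hp : p.Prime)
include hp

theorem mul_fermatQuotient {a : ℕ} (ha : ¬ p ∣ a) :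
    (p : ℤ) * fermatQuotient p a = (a : ℤ) ^ (p - 1) - 1 := by
  have hcop : IsCoprime (a : ℤ) p :=
    Nat.isCoprime_iff_coprime.mpr (Nat.coprime_comm.mp ((hp.coprime_iff_not_dvd).mpr ha))
  exact Int.mul_ediv_cancel' (Int.ModEq.pow_card_sub_one_eq_one hp hcop).symm.dvd

theorem mul_wilsonQuotient : (p : ℤ) * wilsonQuotient p = ((p - 1)! : ℤ) + 1 := by
  have : Fact p.Prime := ⟨hp⟩
  refine Int.mul_ediv_cancel' ((ZMod.intCast_zmod_eq_zero_iff_dvd _ p).mp ?_)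
  push_cast
  rw [ZMod.wilsons_lemma, neg_add_cancel]

end quotients

theorem wilsonQuotient_eq_sum_fermatQuotient {p : ℕ} (hp : p.Prime) (hodd : Odd p) :
    wilsonQuotient p =
      ∑ a ∈ Icc 1 (p - 1), (-1) ^ a * ((p - 1).choose a : ℤ) * fermatQuotient p a := by
  obtain ⟨n, rfl⟩ : ∃ n, p = n + 1 := ⟨p - 1, by have := hp.one_lt; omega⟩
  have hn : Even n := by simpa [Nat.odd_add_one] using hodd
  have hn0 : n ≠ 0 := by rintro rfl; exact Nat.not_prime_one hp
  rw [Nat.add_sub_cancel]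
  have hpowers := sum_neg_one_pow_mul_choose_mul_pow_self (R := ℤ) hn
  have hones := Int.alternating_sum_range_choose_of_ne hn0
  rw [sum_range_succ_eq_add_sum_Icc] at hpowers hones
  refine mul_left_cancel₀ (Nat.cast_ne_zero.mpr hp.ne_zero) ?_
  rw [mul_wilsonQuotient hp, mul_sum]
  calc ((n + 1 - 1)! : ℤ) + 1
      = ∑ a ∈ Icc 1 n,
          ((-1) ^ a * (n.choose a : ℤ) * (a : ℤ) ^ n - (-1) ^ a * (n.choose a : ℤ)) := by
        rw [sum_sub_distrib]; simp [zero_pow hn0] at hpowers hones ⊢; omega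
    _ = _ := sum_congr rfl fun a ha => by
        rw [mem_Icc] at ha
        rw [mul_left_comm, mul_fermatQuotient hp (Nat.not_dvd_of_pos_of_lt ha.1 (by omega)),
          Nat.add_sub_cancel]
        ring

theorem exists_neg_one_pow_mul_choose_eq {p : ℕ} [Fact p.Prime] {a : ℕ} (ha : a < p) :
    ∃ r ∈ pIntegralRat p,
      (-1) ^ a * ((p - 1).choose a : ℚ) = 1 - p * harmonicNum a + p ^ 2 * r := by
  have hp : ((p - 1 : ℕ) : ℚ) + 1 = p := by
    rw [Nat.cast_sub (Fact.out : p.Prime).one_le]; ring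
  rw [neg_one_pow_mul_choose_eq_prod, hp]
  simp_rw [div_eq_mul_one_div (p : ℚ)]
  refine (pIntegralRat p).exists_prod_one_sub_mul_eq (natCast_mem _ p) _ fun k hk => ?_
  rw [mem_Icc] at hk
  rw [one_div]
  exact inv_natCast_mem_pIntegralRat (Nat.not_dvd_of_pos_of_lt hk.1 (by omega))

theorem stmt_14 (p : ℕ) (hp : p.Prime) (hodd : Odd p) :
    ratCongr p 2 ((wilsonQuotient p : ℚ))
      ((∑ a ∈ Icc 1 (p - 1), ((fermatQuotient p a : ℚ)))
        - (p : ℚ) * ∑ a ∈ Icc 1 (p - 1), harmonicNum a * (fermatQuotient p a : ℚ)) := by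
  have : Fact p.Prime := ⟨hp⟩
  have hterm : ∀ a ∈ Icc 1 (p - 1), ∃ r ∈ pIntegralRat p,
      (-1) ^ a * ((p - 1).choose a : ℚ) = 1 - p * harmonicNum a + p ^ 2 * r := fun a ha =>
    exists_neg_one_pow_mul_choose_eq (by simp at ha; omega)
  choose! r hr hchoose using hterm
  refine ratCongr_of_sub_eq_mul (z := ∑ a ∈ Icc 1 (p - 1), r a * fermatQuotient p a)
    (sum_mem fun a ha => mul_mem (hr a ha) (intCast_mem _ _)) ?_
  rw [wilsonQuotient_eq_sum_fermatQuotient hp hodd]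
  push_cast
  rw [mul_sum, mul_sum, ← sum_sub_distrib, ← sum_sub_distrib]
  refine sum_congr rfl fun a ha => ?_
  rw [hchoose a ha]; ring
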